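/- arXiv:2210.04160 — 4 statements merged into one kernel-verified Lean document; each statement's English description precedes it below -/
import Mathlib

section
/- Let t ≥ 2 and b be an integer with 0 ≤ b < t², b ≠ t², and suppose s = b − t² + t²(t−1)²/(b − t²) + 2t² − t (equivalently s(b−t²) = b² − tb − t³ + t²). Then s ≤ t. -/
theorem stmt_5_general (t b s : ℝ) (hbt : b < t ^ 2)
    (hs : s * (b - t ^ 2) = b ^ 2 - t * b - t ^ 3 + t ^ 2) :
    s ≤ t := by
  have hgap : s * (b - t ^ 2) - t * (b - t ^ 2) = (b - t) ^ 2 := by rw [hs]; ring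
  rw [← mul_le_mul_right_of_neg (sub_neg.2 hbt)]
  linarith [sq_nonneg (b - t)]

/-- Let `t ≥ 2` and `0 ≤ b < t²` with `s(b − t²) = b² − tb − t³ + t²`
(equivalently `s = b − t² + t²(t−1)²/(b − t²) + 2t² − t`). Then `s ≤ t`. -/
theorem stmt_5 (t b s : ℝ) (ht : 2 ≤ t) (hb0 : 0 ≤ b) (hbt : b < t ^ 2)
    (hbne : b ≠ t ^ 2)
    (hs : s * (b - t ^ 2) = b ^ 2 - t * b - t ^ 3 + t ^ 2) :
    s ≤ t :=
  stmt_5_general t b s hbt hs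
end

section
/- Let s ≥ t ≥ 2, μ = −1, and let a, b be integers with 0 ≤ a ≤ t, 0 ≤ b ≤ s, (a,b) ≠ (0,0). If (1 − ts)(a + b − 1) + a²s + tb² − 2ab = 0 and 1 − ts + a(s−1) + b(t−1) = 0, then (a,b) = (1,s) or (a,b) = (t,1). -/
/-!
The second equation is the line through `(1, s)` and `(t, 1)`. Parametrising it as
`(a, b) = (1, s) + λ (t - 1, 1 - s)`, the first equation becomes
`(s + t - 2) (t s - 1) λ (λ - 1) = 0`, because `(1, s)` and `(t, 1)` lie on the conic and the
quadratic form `s a² + t b² - 2 a b` takes the value `(s + t - 2) (t s - 1)` on the direction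
vector. Since `λ = (a - 1) / (t - 1)`, the factor `(t - 1)² λ (λ - 1)` is `(a - 1) (a - t)`, so
`a ∈ {1, t}`, and the line then determines `b`.
-/

section

variable {R : Type*} [CommRing R] {t s a b : R}

theorem mul_sub_one_mul_sub_eq_zero_of_quadric_of_line
    (h1 : (1 - t * s) * (a + b - 1) + a ^ 2 * s + t * b ^ 2 - 2 * a * b = 0)
    (h2 : 1 - t * s + a * (s - 1) + b * (t - 1) = 0) :
    (s + t - 2) * (t * s - 1) * ((a - 1) * (a - t)) = 0 := by
  linear_combination (t - 1) ^ 2 * h1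
    - (t * (t - 1) * b - t * (1 - t * s + a * (s - 1)) + (t - 1) * (1 - t * s - 2 * a)) * h2

theorem eq_one_s_or_eq_t_one_of_quadric_of_line [NoZeroDivisors R]
    (ht : t - 1 ≠ 0) (hst : s + t - 2 ≠ 0) (hts1 : t * s - 1 ≠ 0)
    (h1 : (1 - t * s) * (a + b - 1) + a ^ 2 * s + t * b ^ 2 - 2 * a * b = 0)
    (h2 : 1 - t * s + a * (s - 1) + b * (t - 1) = 0) :
    (a, b) = (1, s) ∨ (a, b) = (t, 1) := by
  have hprod := mul_sub_one_mul_sub_eq_zero_of_quadric_of_line h1 h2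
  rcases mul_eq_zero.1 ((mul_eq_zero.1 hprod).resolve_left (mul_ne_zero hst hts1)) with ha | ha
  · have hb : (t - 1) * (b - s) = 0 := by linear_combination h2 - (s - 1) * ha
    left
    rw [sub_eq_zero.1 ha, sub_eq_zero.1 ((mul_eq_zero.1 hb).resolve_left ht)]
  · have hb : (t - 1) * (b - 1) = 0 := by linear_combination h2 - (s - 1) * ha
    right
    rw [sub_eq_zero.1 ha, sub_eq_zero.1 ((mul_eq_zero.1 hb).resolve_left ht)]

end

theorem stmt_6_general (t s a b : ℤ) (ht : 2 ≤ t) (hts : t ≤ s)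
    (h1 : (1 - t * s) * (a + b - 1) + a ^ 2 * s + t * b ^ 2 - 2 * a * b = 0)
    (h2 : 1 - t * s + a * (s - 1) + b * (t - 1) = 0) :
    (a, b) = (1, s) ∨ (a, b) = (t, 1) := by
  have hts1 : t * s - 1 ≠ 0 := by nlinarith
  exact eq_one_s_or_eq_t_one_of_quadric_of_line (by omega) (by omega) hts1 h1 h2

/-- Let `s ≥ t ≥ 2`, `μ = −1`, and `a, b` integers with `0 ≤ a ≤ t`, `0 ≤ b ≤ s`,
`(a,b) ≠ (0,0)`. If `(1 − ts)(a + b − 1) + a²s + tb² − 2ab = 0` and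
`1 − ts + a(s−1) + b(t−1) = 0`, then `(a,b) = (1,s)` or `(a,b) = (t,1)`. -/
theorem stmt_6 (t s a b : ℤ) (ht : 2 ≤ t) (hts : t ≤ s)
    (ha0 : 0 ≤ a) (hat : a ≤ t) (hb0 : 0 ≤ b) (hbs : b ≤ s)
    (hab : (a, b) ≠ (0, 0))
    (h1 : (1 - t * s) * (a + b - 1) + a ^ 2 * s + t * b ^ 2 - 2 * a * b = 0)
    (h2 : 1 - t * s + a * (s - 1) + b * (t - 1) = 0) :
    (a, b) = (1, s) ∨ (a, b) = (t, 1) :=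
  stmt_6_general t s a b ht hts h1 h2
end

section
/- Let μ be a nonzero real number, t a positive integer, and a, b real numbers with μ ∉ {0, −1, −t}, satisfying μ²(a+b) + μ(as + tb) = −μ(μ² − ts) and (μ² − ts)(a+b) + a²s + tb² + 2abμ = μ²(μ² − ts), with μ² ≠ ts, a ≠ −μ, and 0 ≤ a ≤ t−1. Then b = (μ³ + tμ² − ta + a²)/(μ + a). -/
/-!
Dividing equation (5) by `μ` gives a linear relation `E = 0`. Two combinations of `E` and
equation (6) then factor: `t·E` gives `(t - a)(μ² - ts) + (μ + t)(tb + μa) = 0`, so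
`tb + μa ≠ 0` because `a < t` and `μ² ≠ ts`; and a combination of `E` and (6) gives
`(tb + μa)(b(μ + a) - (μ³ + tμ² - ta + a²)) = 0`, whose second factor must therefore vanish.
-/

section StarComplementEquations

variable {K : Type*} [Field K] {t μ s a b : K}

theorem reduced_eq5_of_eq5 (hμ : μ ≠ 0)
    (h5 : μ ^ 2 * (a + b) + μ * (a * s + t * b) = -μ * (μ ^ 2 - t * s)) :
    μ * (a + b) + a * s + t * b + (μ ^ 2 - t * s) = 0 :=
  mul_left_cancel₀ hμ (by linear_combination h5)

theorem sub_mul_add_mul_eq_zero_of_reduced_eq5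
    (hE : μ * (a + b) + a * s + t * b + (μ ^ 2 - t * s) = 0) :
    (t - a) * (μ ^ 2 - t * s) + (μ + t) * (t * b + μ * a) = 0 := by
  linear_combination t * hE

theorem mul_mul_sub_eq_zero_of_reduced_eq5_of_eq6
    (hE : μ * (a + b) + a * s + t * b + (μ ^ 2 - t * s) = 0)
    (h6 : (μ ^ 2 - t * s) * (a + b) + a ^ 2 * s + t * b ^ 2 + 2 * a * b * μ
      = μ ^ 2 * (μ ^ 2 - t * s)) :
    (t * b + μ * a) * (b * (μ + a) - (μ ^ 3 + t * μ ^ 2 - t * a + a ^ 2)) = 0 := by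
  linear_combination (a - t) * h6 - (a ^ 2 + t * μ ^ 2 - t * (a + b)) * hE

theorem mul_add_mul_ne_zero_of_reduced_eq5 (hat : t - a ≠ 0) (hts : μ ^ 2 ≠ t * s)
    (hE : μ * (a + b) + a * s + t * b + (μ ^ 2 - t * s) = 0) :
    t * b + μ * a ≠ 0 := by
  intro hc
  have h := sub_mul_add_mul_eq_zero_of_reduced_eq5 hE
  rw [hc, mul_zero, add_zero] at h
  exact mul_ne_zero hat (sub_ne_zero.mpr hts) h

end StarComplementEquations

theorem stmt_9_general (t : ℕ) (μ s a b : ℝ)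
    (hμ0 : μ ≠ 0)
    (h1 : μ ^ 2 * (a + b) + μ * (a * s + (t : ℝ) * b) = -μ * (μ ^ 2 - (t : ℝ) * s))
    (h2 : (μ ^ 2 - (t : ℝ) * s) * (a + b) + a ^ 2 * s + (t : ℝ) * b ^ 2 + 2 * a * b * μ
      = μ ^ 2 * (μ ^ 2 - (t : ℝ) * s))
    (hts : μ ^ 2 ≠ (t : ℝ) * s)
    (ha : a ≠ -μ) (hat : a ≤ (t : ℝ) - 1) :
    b = (μ ^ 3 + (t : ℝ) * μ ^ 2 - (t : ℝ) * a + a ^ 2) / (μ + a) := by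
  have hE := reduced_eq5_of_eq5 hμ0 h1
  have hta : (t : ℝ) - a ≠ 0 := by linarith
  have hμa : μ + a ≠ 0 := fun h => ha (by linarith)
  have hb := (mul_eq_zero.mp (mul_mul_sub_eq_zero_of_reduced_eq5_of_eq6 hE h2)).resolve_left
    (mul_add_mul_ne_zero_of_reduced_eq5 hta hts hE)
  rw [eq_div_iff hμa]
  exact sub_eq_zero.mp hb

/-- Lemma 3.7: if `μ ∉ {0, −1, −t}`, a vertex of type `(a,b)` with `0 ≤ a ≤ t−1`,
`a ≠ −μ`, satisfying equations (5) and (6) with `μ² ≠ ts`, has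
`b = (μ³ + tμ² − ta + a²)/(μ + a)`. -/
theorem stmt_9 (t : ℕ) (ht : 0 < t) (μ s a b : ℝ)
    (hμ0 : μ ≠ 0) (hμ1 : μ ≠ -1) (hμt : μ ≠ -(t : ℝ))
    (h1 : μ ^ 2 * (a + b) + μ * (a * s + (t : ℝ) * b) = -μ * (μ ^ 2 - (t : ℝ) * s))
    (h2 : (μ ^ 2 - (t : ℝ) * s) * (a + b) + a ^ 2 * s + (t : ℝ) * b ^ 2 + 2 * a * b * μ
      = μ ^ 2 * (μ ^ 2 - (t : ℝ) * s))
    (hts : μ ^ 2 ≠ (t : ℝ) * s)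
    (ha : a ≠ -μ) (ha0 : 0 ≤ a) (hat : a ≤ (t : ℝ) - 1) :
    b = (μ ^ 3 + (t : ℝ) * μ ^ 2 - (t : ℝ) * a + a ^ 2) / (μ + a) :=
  stmt_9_general t μ s a b hμ0 h1 h2 hts ha hat
end

section
/- Let s ≥ 2 and μ be a real number with μ ∉ {−1,0}, μ ≠ ±s, and let a, b be integers with 0 ≤ a,b ≤ s, (a,b) ≠ (0,0), satisfying μ²(a+b) + μs(a+b) = −μ(μ² − s²) and (μ² − s²)(a+b) + s(a² + b²) + 2abμ = μ²(μ² − s²). Then a + b = s − μ, and {a, b} = {x₁, x₂} where x₁,₂ = (s − μ ± √((s−μ²)² − (μ²+μ)²))/2; in particular μ ∈ ℤ and |μ| < s. -/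
/-!
Since `μ ≠ 0` and `μ ≠ -s`, equation (5) factors as `μ (μ + s) (a + b - (s - μ)) = 0`, so
`a + b = s - μ`; in particular `μ = s - a - b` is an integer, and `0 < a + b < 2s` gives
`|μ| < s`. Substituting `μ = s - (a + b)` into equation (6) turns it into
`(a + b) ((s - μ²)² - (μ² + μ)² - (a - b)²) = 0`, so the discriminant is `(a - b)²` and
`a, b` are the two roots of `x² - (s - μ) x + ab`.
-/

theorem add_eq_sub_of_mul_add_eq {K : Type*} [Field K] {μ s x : K} (hμ : μ ≠ 0) (hμs : μ ≠ -s)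
    (h : μ ^ 2 * x + μ * s * x = -μ * (μ ^ 2 - s ^ 2)) : x = s - μ := by
  have hfactor : μ * (μ + s) * (x - (s - μ)) = 0 := by linear_combination h
  have hμs' : μ + s ≠ 0 := fun h => hμs (eq_neg_of_add_eq_zero_left h)
  simpa [hμ, hμs', sub_eq_zero] using hfactor

theorem discriminant_eq_sq_sub {K : Type*} [Field K] {μ s a b : K} (hsum : a + b = s - μ)
    (hne : a + b ≠ 0)
    (h : (μ ^ 2 - s ^ 2) * (a + b) + s * (a ^ 2 + b ^ 2) + 2 * a * b * μ = μ ^ 2 * (μ ^ 2 - s ^ 2)) :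
    (s - μ ^ 2) ^ 2 - (μ ^ 2 + μ) ^ 2 = (a - b) ^ 2 := by
  obtain rfl : μ = s - (a + b) := by linear_combination hsum
  have hfactor : (a + b) * ((s - (s - (a + b)) ^ 2) ^ 2 - ((s - (a + b)) ^ 2 + (s - (a + b))) ^ 2
      - (a - b) ^ 2) = 0 := by
    linear_combination (-2 : K) * h
  exact sub_eq_zero.1 ((mul_eq_zero.1 hfactor).resolve_left hne)

theorem eq_half_add_sqrt_or_eq_half_sub_sqrt {x y p : ℝ} (h : x + y = p) :
    (x = (p + √((x - y) ^ 2)) / 2 ∧ y = (p - √((x - y) ^ 2)) / 2) ∨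
      (x = (p - √((x - y) ^ 2)) / 2 ∧ y = (p + √((x - y) ^ 2)) / 2) := by
  rw [Real.sqrt_sq_eq_abs]
  rcases le_total y x with hyx | hxy
  · left
    rw [abs_of_nonneg (sub_nonneg.2 hyx)]
    constructor <;> linarith
  · right
    rw [abs_of_nonpos (sub_nonpos.2 hxy)]
    constructor <;> linarith

theorem Int.add_pos_of_nonneg_of_pair_ne_zero {a b : ℤ} (ha : 0 ≤ a) (hb : 0 ≤ b)
    (hab : (a, b) ≠ (0, 0)) : 0 < a + b := by
  have : ¬(a = 0 ∧ b = 0) := fun h => hab (by rw [h.1, h.2])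
  omega

theorem stmt_15_general (s a b : ℤ) (μ : ℝ)
    (hμ0 : μ ≠ 0) (hμs' : μ ≠ -(s : ℝ))
    (ha0 : 0 ≤ a) (has : a ≤ s) (hb0 : 0 ≤ b) (hbs : b ≤ s) (hab : (a, b) ≠ (0, 0))
    (h1 : μ ^ 2 * ((a : ℝ) + b) + μ * (s : ℝ) * ((a : ℝ) + b) = -μ * (μ ^ 2 - (s : ℝ) ^ 2))
    (h2 : (μ ^ 2 - (s : ℝ) ^ 2) * ((a : ℝ) + b) + (s : ℝ) * ((a : ℝ) ^ 2 + (b : ℝ) ^ 2)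
        + 2 * a * b * μ = μ ^ 2 * (μ ^ 2 - (s : ℝ) ^ 2)) :
    (a : ℝ) + b = (s : ℝ) - μ ∧
    (((a : ℝ) = ((s : ℝ) - μ + Real.sqrt (((s : ℝ) - μ ^ 2) ^ 2 - (μ ^ 2 + μ) ^ 2)) / 2 ∧
        (b : ℝ) = ((s : ℝ) - μ - Real.sqrt (((s : ℝ) - μ ^ 2) ^ 2 - (μ ^ 2 + μ) ^ 2)) / 2) ∨
      ((a : ℝ) = ((s : ℝ) - μ - Real.sqrt (((s : ℝ) - μ ^ 2) ^ 2 - (μ ^ 2 + μ) ^ 2)) / 2 ∧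
        (b : ℝ) = ((s : ℝ) - μ + Real.sqrt (((s : ℝ) - μ ^ 2) ^ 2 - (μ ^ 2 + μ) ^ 2)) / 2)) ∧
    (∃ m : ℤ, μ = (m : ℝ)) ∧ |μ| < (s : ℝ) := by
  have hpos : (0 : ℝ) < a + b := by exact_mod_cast Int.add_pos_of_nonneg_of_pair_ne_zero ha0 hb0 hab
  have hle : (a : ℝ) + b ≤ 2 * s := by exact_mod_cast (by omega : a + b ≤ 2 * s)
  have hsum := add_eq_sub_of_mul_add_eq hμ0 hμs' h1
  have hlt : (a : ℝ) + b < 2 * s := hle.lt_of_ne fun h => hμs' (by linarith)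
  refine ⟨hsum, ?_, ⟨s - a - b, by push_cast; linarith⟩, abs_lt.2 ⟨by linarith, by linarith⟩⟩
  rw [discriminant_eq_sq_sub hsum hpos.ne' h2]
  exact eq_half_add_sqrt_or_eq_half_sub_sqrt hsum

/-- Proposition 5.1(1): with `t = s` in equations (5) and (6), a vertex of type `(a,b)`
for a non-main eigenvalue `μ ∉ {−1, 0}`, `μ ≠ ±s`, of `K_{s,s}` satisfies `a + b = s − μ`,
`{a, b} = {x₁, x₂}` with `x₁,₂ = (s − μ ± √((s−μ²)² − (μ²+μ)²))/2`; in particular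
`μ ∈ ℤ` and `|μ| < s`. -/
theorem stmt_15 (s a b : ℤ) (μ : ℝ) (hs : 2 ≤ s)
    (hμ1 : μ ≠ -1) (hμ0 : μ ≠ 0) (hμs : μ ≠ (s : ℝ)) (hμs' : μ ≠ -(s : ℝ))
    (ha0 : 0 ≤ a) (has : a ≤ s) (hb0 : 0 ≤ b) (hbs : b ≤ s) (hab : (a, b) ≠ (0, 0))
    (h1 : μ ^ 2 * ((a : ℝ) + b) + μ * (s : ℝ) * ((a : ℝ) + b) = -μ * (μ ^ 2 - (s : ℝ) ^ 2))
    (h2 : (μ ^ 2 - (s : ℝ) ^ 2) * ((a : ℝ) + b) + (s : ℝ) * ((a : ℝ) ^ 2 + (b : ℝ) ^ 2)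
        + 2 * a * b * μ = μ ^ 2 * (μ ^ 2 - (s : ℝ) ^ 2)) :
    (a : ℝ) + b = (s : ℝ) - μ ∧
    (((a : ℝ) = ((s : ℝ) - μ + Real.sqrt (((s : ℝ) - μ ^ 2) ^ 2 - (μ ^ 2 + μ) ^ 2)) / 2 ∧
        (b : ℝ) = ((s : ℝ) - μ - Real.sqrt (((s : ℝ) - μ ^ 2) ^ 2 - (μ ^ 2 + μ) ^ 2)) / 2) ∨
      ((a : ℝ) = ((s : ℝ) - μ - Real.sqrt (((s : ℝ) - μ ^ 2) ^ 2 - (μ ^ 2 + μ) ^ 2)) / 2 ∧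
        (b : ℝ) = ((s : ℝ) - μ + Real.sqrt (((s : ℝ) - μ ^ 2) ^ 2 - (μ ^ 2 + μ) ^ 2)) / 2)) ∧
    (∃ m : ℤ, μ = (m : ℝ)) ∧ |μ| < (s : ℝ) :=
  stmt_15_general s a b μ hμ0 hμs' ha0 has hb0 hbs hab h1 h2
end
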